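/- The 8-dimensional algebra S1-bar with basis e_1,...,e_8 and nonzero products e_3e_3=-3e_4, e_3e_5=e_6, e_3e_8=-e_7, e_5e_1=-2e_1, e_5e_2=-3e_2, e_5e_3=-e_3, e_5e_5=-2e_5, e_5e_6=-e_6, e_5e_7=-e_7, e_5e_8=-2e_8, e_6e_3=3e_4, e_6e_5=-e_6, e_6e_8=e_7, e_7e_3=3e_4, e_7e_5=-e_6, e_7e_8=e_7, e_8e_2=e_2, e_8e_3=-e_3, e_8e_4=-2e_4, e_8e_6=-e_6, e_8e_7=-e_7 is terminal: it satisfies, for all a,b,x,y, the identity b(a(xy)-(ax)y-x(ay)) - a((bx)y) + (a(bx))y + (bx)(ay) - a(x(by)) + (ax)(by) + x(a(by)) = -F(a,b)(xy) + (F(a,b)x)y + x(F(a,b)y) with F(a,b)=(1/3)(2ab+ba). -/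

import Mathlib

/-! Once the product is written out from its structure constants, each of the eight coordinates
of the identity is a polynomial identity with rational coefficients in the 32 coordinates of
`a`, `b`, `x`, `y`. -/

def tbl (F : Type*) [Field F] : Fin 8 → Fin 8 → Fin 8 → F :=
  ![![![0, 0, 0, 0, 0, 0, 0, 0], ![0, 0, 0, 0, 0, 0, 0, 0], ![0, 0, 0, 0, 0, 0, 0, 0], ![0, 0, 0, 0, 0, 0, 0, 0], ![0, 0, 0, 0, 0, 0, 0, 0], ![0, 0, 0, 0, 0, 0, 0, 0], ![0, 0, 0, 0, 0, 0, 0, 0], ![0, 0, 0, 0, 0, 0, 0, 0]],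
    ![![0, 0, 0, 0, 0, 0, 0, 0], ![0, 0, 0, 0, 0, 0, 0, 0], ![0, 0, 0, 0, 0, 0, 0, 0], ![0, 0, 0, 0, 0, 0, 0, 0], ![0, 0, 0, 0, 0, 0, 0, 0], ![0, 0, 0, 0, 0, 0, 0, 0], ![0, 0, 0, 0, 0, 0, 0, 0], ![0, 0, 0, 0, 0, 0, 0, 0]],
    ![![0, 0, 0, 0, 0, 0, 0, 0], ![0, 0, 0, 0, 0, 0, 0, 0], ![0, 0, 0, -3, 0, 0, 0, 0], ![0, 0, 0, 0, 0, 0, 0, 0], ![0, 0, 0, 0, 0, 1, 0, 0], ![0, 0, 0, 0, 0, 0, 0, 0], ![0, 0, 0, 0, 0, 0, 0, 0], ![0, 0, 0, 0, 0, 0, -1, 0]],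
    ![![0, 0, 0, 0, 0, 0, 0, 0], ![0, 0, 0, 0, 0, 0, 0, 0], ![0, 0, 0, 0, 0, 0, 0, 0], ![0, 0, 0, 0, 0, 0, 0, 0], ![0, 0, 0, 0, 0, 0, 0, 0], ![0, 0, 0, 0, 0, 0, 0, 0], ![0, 0, 0, 0, 0, 0, 0, 0], ![0, 0, 0, 0, 0, 0, 0, 0]],
    ![![-2, 0, 0, 0, 0, 0, 0, 0], ![0, -3, 0, 0, 0, 0, 0, 0], ![0, 0, -1, 0, 0, 0, 0, 0], ![0, 0, 0, 0, 0, 0, 0, 0], ![0, 0, 0, 0, -2, 0, 0, 0], ![0, 0, 0, 0, 0, -1, 0, 0], ![0, 0, 0, 0, 0, 0, -1, 0], ![0, 0, 0, 0, 0, 0, 0, -2]],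
    ![![0, 0, 0, 0, 0, 0, 0, 0], ![0, 0, 0, 0, 0, 0, 0, 0], ![0, 0, 0, 3, 0, 0, 0, 0], ![0, 0, 0, 0, 0, 0, 0, 0], ![0, 0, 0, 0, 0, -1, 0, 0], ![0, 0, 0, 0, 0, 0, 0, 0], ![0, 0, 0, 0, 0, 0, 0, 0], ![0, 0, 0, 0, 0, 0, 1, 0]],
    ![![0, 0, 0, 0, 0, 0, 0, 0], ![0, 0, 0, 0, 0, 0, 0, 0], ![0, 0, 0, 3, 0, 0, 0, 0], ![0, 0, 0, 0, 0, 0, 0, 0], ![0, 0, 0, 0, 0, -1, 0, 0], ![0, 0, 0, 0, 0, 0, 0, 0], ![0, 0, 0, 0, 0, 0, 0, 0], ![0, 0, 0, 0, 0, 0, 1, 0]],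
    ![![0, 0, 0, 0, 0, 0, 0, 0], ![0, 1, 0, 0, 0, 0, 0, 0], ![0, 0, -1, 0, 0, 0, 0, 0], ![0, 0, 0, -2, 0, 0, 0, 0], ![0, 0, 0, 0, 0, 0, 0, 0], ![0, 0, 0, 0, 0, -1, 0, 0], ![0, 0, 0, 0, 0, 0, -1, 0], ![0, 0, 0, 0, 0, 0, 0, 0]]]

def mul (F : Type*) [Field F] (x y : Fin 8 → F) : Fin 8 → F :=
  fun k => ∑ i, ∑ j, x i * y j * tbl F i j k

/-- The associated multiplication of a terminal algebra: `F(a,b) = (1/3)(2ab+ba)`. -/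
def termF (F : Type*) [Field F] (a b : Fin 8 → F) : Fin 8 → F :=
  (3 : F)⁻¹ • ((2 : F) • mul F a b + mul F b a)

lemma mul_eq_explicit (F : Type*) [Field F] (x y : Fin 8 → F) :
    mul F x y = ![-2 * x 4 * y 0,
      -3 * x 4 * y 1 + x 7 * y 1,
      -(x 4 * y 2) - x 7 * y 2,
      -3 * x 2 * y 2 + 3 * x 5 * y 2 + 3 * x 6 * y 2 - 2 * x 7 * y 3,
      -2 * x 4 * y 4,
      x 2 * y 4 - x 4 * y 5 - x 5 * y 4 - x 6 * y 4 - x 7 * y 5,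
      -(x 2 * y 7) - x 4 * y 6 + x 5 * y 7 + x 6 * y 7 - x 7 * y 6,
      -2 * x 4 * y 7] := by
  ext k
  fin_cases k <;>
  · simp only [mul, tbl, Fin.sum_univ_eight, Fin.reduceFinMk, Matrix.cons_val]
    ring

/-- `S₁`-bar is a terminal algebra. -/
theorem S1bar_terminal (F : Type*) [Field F] [CharZero F] (a b x y : Fin 8 → F) :
    mul F b (mul F a (mul F x y) - mul F (mul F a x) y - mul F x (mul F a y)) - mul F a (mul F (mul F b x) y) + mul F (mul F a (mul F b x)) y + mul F (mul F b x) (mul F a y) - mul F a (mul F x (mul F b y)) + mul F (mul F a x) (mul F b y) + mul F x (mul F a (mul F b y))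
      = - mul F (termF F a b) (mul F x y) + mul F (mul F (termF F a b) x) y + mul F x (mul F (termF F a b) y) := by
  funext k
  fin_cases k <;>
  · simp only [termF, mul_eq_explicit, Pi.add_apply, Pi.sub_apply, Pi.neg_apply, Pi.smul_apply,
      smul_eq_mul, Fin.reduceFinMk, Matrix.cons_val]
    ring
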